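/- Let E be a finite-dimensional real inner product space, k ≥ 1, and let (xₘ) be a sequence of k times continuously differentiable curves xₘ : [0,1] → E such that sup_{m} sup_{t∈[0,1]} ‖xₘ(t)‖ ≤ R and Σ_{j=1}^{k} ∫₀¹ ‖xₘ^{(j)}(t)‖² dt ≤ K for all m, for some constants R, K. Then there exist a strictly increasing map φ : ℕ → ℕ and a (k−1) times continuously differentiable curve y : [0,1] → E such that for every 0 ≤ i ≤ k−1 the derivatives x_{φ(m)}^{(i)} converge to y^{(i)} uniformly on [0,1] as m → ∞. -/

import Mathlib

/-!
Write `D m i` for the `i`-th derivative of `x m` on `[0, 1]`. By the fundamental theorem of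
calculus and a weighted AM-GM inequality, the `L²` bound on `D m (i + 1)` makes every `D m i`,
`i < k`, uniformly `½`-Hölder; averaging `‖D m i t‖ ≤ ‖D m i s‖ + C` over `s` and using the
`L²` bound on `D m i` itself makes it uniformly bounded for `i ≥ 1` (and `‖D m 0‖ ≤ R`).
Arzelà–Ascoli, applied once to the jets `(D m 0, …, D m (k - 1))` with values in the proper
space `Fin k → E`, gives a subsequence along which each `D m i` converges uniformly to some `Y i`. Passing to the limit in
`D m i t = D m i 0 + ∫₀ᵗ D m (i + 1)` shows that `Y (i + 1)` is the derivative of `Y i` on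
`[0, 1]`, so `y = Y 0` is `C^{k-1}` with `i`-th derivative `Y i`.
-/

open Set Filter Topology MeasureTheory intervalIntegral
open scoped BoundedContinuousFunction

section IteratedDerivWithin

variable {𝕜 F : Type*} [NontriviallyNormedField 𝕜] [NormedAddCommGroup F] [NormedSpace 𝕜 F]
  {s : Set 𝕜}

theorem ContDiffOn.hasDerivWithinAt_iteratedDerivWithin {f : 𝕜 → F} {n : WithTop ℕ∞} {i : ℕ}
    (hf : ContDiffOn 𝕜 n f s) (hs : UniqueDiffOn 𝕜 s) (hi : (i : WithTop ℕ∞) < n) {t : 𝕜}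
    (ht : t ∈ s) :
    HasDerivWithinAt (iteratedDerivWithin i f s) (iteratedDerivWithin (i + 1) f s t) s t := by
  rw [iteratedDerivWithin_succ]
  exact (hf.differentiableOn_iteratedDerivWithin hi hs t ht).hasDerivWithinAt

theorem eqOn_iteratedDerivWithin_of_hasDerivWithinAt_succ {g : ℕ → 𝕜 → F} {n : ℕ}
    (hs : UniqueDiffOn 𝕜 s) (hg : ∀ i < n, ∀ t ∈ s, HasDerivWithinAt (g i) (g (i + 1) t) s t) :
    ∀ i ≤ n, EqOn (iteratedDerivWithin i (g 0) s) (g i) s := by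
  intro i hi
  induction i with
  | zero => simp [EqOn]
  | succ i ih =>
    intro t ht
    rw [iteratedDerivWithin_succ, derivWithin_congr (ih (by omega)) (ih (by omega) ht)]
    exact (hg i (by omega) t ht).derivWithin (hs t ht)

theorem contDiffOn_of_hasDerivWithinAt_succ {g : ℕ → 𝕜 → F} {n : ℕ} (hs : UniqueDiffOn 𝕜 s)
    (hgn : ContinuousOn (g n) s)
    (hg : ∀ i < n, ∀ t ∈ s, HasDerivWithinAt (g i) (g (i + 1) t) s t) :
    ContDiffOn 𝕜 n (g 0) s := by
  have hD := eqOn_iteratedDerivWithin_of_hasDerivWithinAt_succ hs hg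
  have hdiff : ∀ i < n, DifferentiableOn 𝕜 (g i) s :=
    fun i hi t ht => (hg i hi t ht).differentiableWithinAt
  apply contDiffOn_of_continuousOn_differentiableOn_deriv
  · intro i hi
    have hi : i ≤ n := by exact_mod_cast hi
    refine ContinuousOn.congr ?_ (hD i hi)
    rcases hi.lt_or_eq with hi | rfl
    exacts [(hdiff i hi).continuousOn, hgn]
  · intro i hi
    have hi : i < n := by exact_mod_cast hi
    exact (hdiff i hi).congr (hD i hi.le)

end IteratedDerivWithin

section Calculus

variable {E : Type*} [NormedAddCommGroup E] {a b : ℝ}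

theorem integral_norm_le_mul_sqrt {g : ℝ → E} (hg : ContinuousOn g (Icc a b)) {s t : ℝ}
    (has : a ≤ s) (hst : s ≤ t) (htb : t ≤ b) :
    ∫ u in s..t, ‖g u‖ ≤ (1 + ∫ u in a..b, ‖g u‖ ^ 2) / 2 * √(t - s) := by
  rcases hst.eq_or_lt with rfl | hst
  · simp
  set r := √(t - s)
  have hr : 0 < r := Real.sqrt_pos.2 (sub_pos.2 hst)
  have hsq : ContinuousOn (fun u => ‖g u‖ ^ 2) (Icc a b) := hg.norm.pow 2
  have hsub : Icc s t ⊆ Icc a b := Icc_subset_Icc has htb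
  have hsqI : IntervalIntegrable (fun u => ‖g u‖ ^ 2) volume s t :=
    (hsq.mono hsub).intervalIntegrable_of_Icc hst.le
  have hamgm : ∀ y : ℝ, y ≤ (r⁻¹ + r * y ^ 2) / 2 := fun y => by
    have : 0 ≤ r⁻¹ * (r * y - 1) ^ 2 := by positivity
    have : r⁻¹ * (r * y - 1) ^ 2 = r * y ^ 2 - 2 * y + r⁻¹ := by field_simp; ring
    linarith
  calc ∫ u in s..t, ‖g u‖
      ≤ ∫ u in s..t, (r⁻¹ + r * ‖g u‖ ^ 2) / 2 :=
        integral_mono_on hst.le ((hg.norm.mono hsub).intervalIntegrable_of_Icc hst.le)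
          ((intervalIntegrable_const.add (hsqI.const_mul r)).div_const 2) fun u _ => hamgm _
    _ = (r + r * ∫ u in s..t, ‖g u‖ ^ 2) / 2 := by
        rw [intervalIntegral.integral_div, integral_add intervalIntegrable_const
          (hsqI.const_mul r), intervalIntegral.integral_const_mul, intervalIntegral.integral_const,
          smul_eq_mul,
          show t - s = r ^ 2 from (Real.sq_sqrt (sub_pos.2 hst).le).symm]
        field_simp
    _ ≤ (r + r * ∫ u in a..b, ‖g u‖ ^ 2) / 2 := by
        gcongr
        exact integral_mono_interval has hst.le htb (Eventually.of_forall fun u => by positivity)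
          (hsq.intervalIntegrable_of_Icc (by linarith))
    _ = (1 + ∫ u in a..b, ‖g u‖ ^ 2) / 2 * r := by ring

variable [NormedSpace ℝ E] [CompleteSpace E]

theorem integral_eq_sub_of_hasDerivWithinAt_Icc {f f' : ℝ → E} {s t : ℝ}
    (hf : ∀ u ∈ Icc a b, HasDerivWithinAt f (f' u) (Icc a b) u)
    (hf' : ContinuousOn f' (Icc a b)) (hs : s ∈ Icc a b) (ht : t ∈ Icc a b) :
    ∫ u in s..t, f' u = f t - f s := by
  have hst : uIcc s t ⊆ Icc a b := uIcc_subset_Icc hs ht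
  refine integral_eq_sub_of_hasDeriv_right
    (fun u hu => (hf u (hst hu)).continuousWithinAt.mono hst) (fun u hu => ?_)
    ((hf'.mono hst).intervalIntegrable)
  have hu' : u ∈ Ioo a b :=
    ⟨(le_min hs.1 ht.1).trans_lt hu.1, hu.2.trans_le (max_le hs.2 ht.2)⟩
  exact ((hf u (Ioo_subset_Icc_self hu')).hasDerivAt (Icc_mem_nhds hu'.1 hu'.2)).hasDerivWithinAt

theorem norm_sub_le_mul_sqrt_of_hasDerivWithinAt {f f' : ℝ → E} {K : ℝ}
    (hf : ∀ u ∈ Icc a b, HasDerivWithinAt f (f' u) (Icc a b) u)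
    (hf' : ContinuousOn f' (Icc a b)) (hK : ∫ u in a..b, ‖f' u‖ ^ 2 ≤ K) {s t : ℝ}
    (hs : s ∈ Icc a b) (ht : t ∈ Icc a b) :
    ‖f t - f s‖ ≤ (1 + K) / 2 * √|t - s| := by
  wlog hst : s ≤ t generalizing s t
  · rw [norm_sub_rev, abs_sub_comm]
    exact this ht hs (le_of_not_ge hst)
  rw [← integral_eq_sub_of_hasDerivWithinAt_Icc hf hf' hs ht, abs_of_nonneg (sub_nonneg.2 hst)]
  calc ‖∫ u in s..t, f' u‖ ≤ ∫ u in s..t, ‖f' u‖ := norm_integral_le_integral_norm hst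
    _ ≤ (1 + ∫ u in a..b, ‖f' u‖ ^ 2) / 2 * √(t - s) :=
        integral_norm_le_mul_sqrt hf' hs.1 hst ht.2
    _ ≤ (1 + K) / 2 * √(t - s) := by gcongr

theorem norm_le_of_hasDerivWithinAt_Icc_zero_one {f f' : ℝ → E} {K₀ K₁ : ℝ}
    (hf : ∀ u ∈ Icc 0 1, HasDerivWithinAt f (f' u) (Icc 0 1) u)
    (hf' : ContinuousOn f' (Icc 0 1)) (hK₀ : ∫ u in (0 : ℝ)..1, ‖f u‖ ^ 2 ≤ K₀)
    (hK₁ : ∫ u in (0 : ℝ)..1, ‖f' u‖ ^ 2 ≤ K₁) {t : ℝ} (ht : t ∈ Icc 0 1) :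
    ‖f t‖ ≤ 1 + (K₀ + K₁) / 2 := by
  have hfc : ContinuousOn f (Icc 0 1) := fun u hu => (hf u hu).continuousWithinAt
  have hfI : IntervalIntegrable (fun s => ‖f s‖) volume 0 1 :=
    hfc.norm.intervalIntegrable_of_Icc zero_le_one
  have hosc : ∀ s ∈ Icc (0 : ℝ) 1, ‖f t‖ ≤ ‖f s‖ + (1 + K₁) / 2 := fun s hs => by
    have h := norm_sub_le_mul_sqrt_of_hasDerivWithinAt hf hf' hK₁ hs ht
    have : √|t - s| ≤ 1 := Real.sqrt_le_one.2 <|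
      abs_sub_le_iff.2 ⟨by linarith [hs.1, ht.2], by linarith [hs.2, ht.1]⟩
    have : 0 ≤ 1 + K₁ := by
      linarith [integral_nonneg (μ := volume) zero_le_one fun u _ => sq_nonneg ‖f' u‖]
    nlinarith [norm_sub_norm_le (f t) (f s)]
  calc ‖f t‖ = ∫ _ in (0 : ℝ)..1, ‖f t‖ := by simp
    _ ≤ ∫ s in (0 : ℝ)..1, (‖f s‖ + (1 + K₁) / 2) :=
        integral_mono_on zero_le_one intervalIntegrable_const
          (hfI.add intervalIntegrable_const) hosc
    _ = (∫ s in (0 : ℝ)..1, ‖f s‖) + (1 + K₁) / 2 := by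
        rw [integral_add hfI intervalIntegrable_const]
        simp
    _ ≤ (1 + K₀) / 2 * √(1 - 0) + (1 + K₁) / 2 := by
        grw [integral_norm_le_mul_sqrt hfc le_rfl zero_le_one le_rfl, hK₀]
    _ = 1 + (K₀ + K₁) / 2 := by norm_num; ring

theorem hasDerivWithinAt_Icc_of_tendstoUniformlyOn {ι : Type*} {l : Filter ι} [l.NeBot]
    [l.IsCountablyGenerated] {f f' : ι → ℝ → E} {g g' : ℝ → E}
    (hf : ∀ i, ∀ u ∈ Icc a b, HasDerivWithinAt (f i) (f' i u) (Icc a b) u)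
    (hf' : ∀ i, ContinuousOn (f' i) (Icc a b))
    (hfg : ∀ u ∈ Icc a b, Tendsto (fun i => f i u) l (𝓝 (g u)))
    (hf'g' : TendstoUniformlyOn f' g' l (Icc a b)) {t : ℝ} (ht : t ∈ Icc a b) :
    HasDerivWithinAt g (g' t) (Icc a b) t := by
  have ha : a ∈ Icc a b := ⟨le_rfl, ht.1.trans ht.2⟩
  have hg' : ContinuousOn g' (Icc a b) := hf'g'.continuousOn (Frequently.of_forall hf')
  have hg : ∀ u ∈ Icc a b, g u = g a + ∫ v in a..u, g' v := by
    intro u hu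
    have hau : uIcc a u ⊆ Icc a b := uIcc_subset_Icc ha hu
    have hlim := (hfg a ha).add <| (hf'g'.mono hau).tendsto_intervalIntegral_of_continuousOn
      (μ := volume) (Eventually.of_forall fun i => (hf' i).mono hau)
    refine tendsto_nhds_unique (hfg u hu) (hlim.congr fun i => ?_)
    rw [integral_eq_sub_of_hasDerivWithinAt_Icc (hf i) (hf' i) ha hu, add_sub_cancel]
  have : Fact (t ∈ Icc a b) := ⟨ht⟩
  have hint : HasDerivWithinAt (fun u => ∫ v in a..u, g' v) (g' t) (Icc a b) t :=
    integral_hasDerivWithinAt_right ((hg'.mono (uIcc_subset_Icc ha ht)).intervalIntegrable)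
      (hg'.stronglyMeasurableAtFilter_nhdsWithin measurableSet_Icc t) (hg' t ht)
  exact (hint.const_add (g a)).congr hg (hg t ht)

end Calculus

theorem exists_strictMono_tendstoUniformlyOn_of_continuity_modulus {α β : Type*}
    [PseudoMetricSpace α] [MetricSpace β] {S : Set α} (hS : IsCompact S) {K : Set β}
    (hK : IsCompact K) {F : ℕ → α → β} (hFK : ∀ m, MapsTo (F m) S K) (ω : ℝ → ℝ)
    (hω : Tendsto ω (𝓝 0) (𝓝 0))
    (hFω : ∀ m, ∀ s ∈ S, ∀ t ∈ S, dist (F m s) (F m t) ≤ ω (dist s t)) :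
    ∃ φ : ℕ → ℕ, StrictMono φ ∧ ∃ L : α → β, ContinuousOn L S ∧
      TendstoUniformlyOn (fun m => F (φ m)) L atTop S := by
  have : CompactSpace S := isCompact_iff_compactSpace.1 hS
  have hequi : Equicontinuous fun m => S.domRestrict (F m) :=
    Metric.equicontinuous_of_continuity_modulus ω hω _ fun s t m => hFω m s s.2 t t.2
  let G : ℕ → S →ᵇ β := fun m => .mkOfCompact ⟨S.domRestrict (F m), hequi.continuous m⟩
  have hequi' : Equicontinuous ((↑) : range G → S → β) := by
    convert hequi.comp (rangeSplitting G) using 1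
    ext f : 1
    exact congrArg DFunLike.coe (apply_rangeSplitting G f).symm
  obtain ⟨L, -, φ, hφ, hL⟩ := (BoundedContinuousFunction.arzela_ascoli K hK (range G)
    (by rintro _ u ⟨m, rfl⟩; exact hFK m u.2) hequi').tendsto_subseq
    fun m => subset_closure (mem_range_self m)
  have hextend : S.domRestrict (Function.extend Subtype.val L (F 0)) = L :=
    funext fun u => Subtype.val_injective.extend_apply L (F 0) u
  refine ⟨φ, hφ, Function.extend Subtype.val L (F 0), ?_, ?_⟩
  · rw [continuousOn_iff_continuous_domRestrict, hextend]
    exact L.continuous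
  · rw [tendstoUniformlyOn_iff_tendstoUniformly_comp_coe,
      show Function.extend Subtype.val L (F 0) ∘ Subtype.val = L from hextend]
    exact BoundedContinuousFunction.tendsto_iff_tendstoUniformly.1 hL

theorem exists_strictMono_tendstoUniformlyOn_iteratedDerivWithin {E : Type*}
    [NormedAddCommGroup E] [NormedSpace ℝ E] [ProperSpace E] {a b : ℝ} (hab : a < b) {n : ℕ}
    {g : ℕ → ℕ → ℝ → E} {M : ℝ} (ω : ℝ → ℝ)
    (hg : ∀ m, ∀ i < n, ∀ t ∈ Icc a b, HasDerivWithinAt (g m i) (g m (i + 1) t) (Icc a b) t)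
    (hgn : ∀ m, ContinuousOn (g m n) (Icc a b))
    (hM : ∀ m, ∀ i ≤ n, ∀ t ∈ Icc a b, ‖g m i t‖ ≤ M) (hω : Tendsto ω (𝓝 0) (𝓝 0))
    (hgω : ∀ m, ∀ i ≤ n, ∀ s ∈ Icc a b, ∀ t ∈ Icc a b,
      dist (g m i s) (g m i t) ≤ ω (dist s t)) :
    ∃ φ : ℕ → ℕ, StrictMono φ ∧ ∃ y : ℝ → E, ContDiffOn ℝ n y (Icc a b) ∧
      ∀ i ≤ n, TendstoUniformlyOn (fun m => g (φ m) i) (iteratedDerivWithin i y (Icc a b))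
        atTop (Icc a b) := by
  have ha : a ∈ Icc a b := left_mem_Icc.2 hab.le
  have hgc : ∀ m, ∀ i ≤ n, ContinuousOn (g m i) (Icc a b) := fun m i hi => by
    rcases hi.lt_or_eq with hi | rfl
    exacts [fun t ht => (hg m i hi t ht).continuousWithinAt, hgn m]
  let F : ℕ → ℝ → Fin (n + 1) → E := fun m t i => g m i t
  have hM0 : 0 ≤ M := (norm_nonneg _).trans (hM 0 0 n.zero_le a ha)
  obtain ⟨φ, hφ, L, hLc, hL⟩ := exists_strictMono_tendstoUniformlyOn_of_continuity_modulus
    isCompact_Icc (isCompact_closedBall (0 : Fin (n + 1) → E) M) (F := F)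
    (fun m t ht => mem_closedBall_zero_iff.2 <|
      (pi_norm_le_iff_of_nonneg hM0).2 fun i => hM m i (Nat.lt_succ_iff.1 i.2) t ht)
    ω hω fun m s hs t ht =>
      (dist_pi_le_iff (dist_nonneg.trans (hgω m 0 n.zero_le s hs t ht))).2
        fun i => hgω m i (Nat.lt_succ_iff.1 i.2) s hs t ht
  let Y : ℕ → ℝ → E := fun i t => L t (Fin.ofNat (n + 1) i)
  have hYU : ∀ i ≤ n, TendstoUniformlyOn (fun m => g (φ m) i) (Y i) atTop (Icc a b) :=
    fun i hi => by
      have hi' : (Fin.ofNat (n + 1) i : ℕ) = i := Nat.mod_eq_of_lt (Nat.lt_succ_of_le hi)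
      have h := (Pi.uniformContinuous_proj _ (Fin.ofNat (n + 1) i)).comp_tendstoUniformlyOn hL
      simpa only [F, Function.comp_def, hi'] using h
  have hYd : ∀ i < n, ∀ t ∈ Icc a b, HasDerivWithinAt (Y i) (Y (i + 1) t) (Icc a b) t :=
    fun i hi t ht => hasDerivWithinAt_Icc_of_tendstoUniformlyOn (fun m => hg (φ m) i hi)
      (fun m => hgc (φ m) (i + 1) hi) (fun u hu => (hYU i hi.le).tendsto_at hu)
      (hYU (i + 1) hi) ht
  refine ⟨φ, hφ, Y 0, contDiffOn_of_hasDerivWithinAt_succ (uniqueDiffOn_Icc hab)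
    ((continuous_apply _).comp_continuousOn hLc) hYd, fun i hi => (hYU i hi).congr_right ?_⟩
  exact (eqOn_iteratedDerivWithin_of_hasDerivWithinAt_succ (uniqueDiffOn_Icc hab) hYd i hi).symm

/-- Corollary 3.5 for curves in Euclidean space: a sequence of `Cᵏ` curves, bounded
in `C⁰` and with uniformly bounded `H^{k-1}` velocity, has a subsequence converging
in `C^{k-1}` on `[0,1]`. -/
theorem stmt5 {E : Type*} [NormedAddCommGroup E] [InnerProductSpace ℝ E]
    [FiniteDimensional ℝ E]
    (k : ℕ) (hk : 1 ≤ k) (R K : ℝ) (x : ℕ → ℝ → E)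
    (hx : ∀ m, ContDiffOn ℝ k (x m) (Set.Icc 0 1))
    (hR : ∀ m, ∀ t ∈ Set.Icc (0:ℝ) 1, ‖x m t‖ ≤ R)
    (hK : ∀ m, (∑ j ∈ Finset.Icc 1 k,
        ∫ t in (0:ℝ)..1, ‖iteratedDerivWithin j (x m) (Set.Icc 0 1) t‖ ^ 2) ≤ K) :
    ∃ φ : ℕ → ℕ, StrictMono φ ∧ ∃ y : ℝ → E,
      ContDiffOn ℝ (k - 1 : ℕ) y (Set.Icc 0 1) ∧
      ∀ i ≤ k - 1, TendstoUniformlyOn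
        (fun m => iteratedDerivWithin i (x (φ m)) (Set.Icc 0 1))
        (iteratedDerivWithin i y (Set.Icc 0 1)) Filter.atTop (Set.Icc 0 1) := by
  let D : ℕ → ℕ → ℝ → E := fun m i => iteratedDerivWithin i (x m) (Icc 0 1)
  have hL2 : ∀ m j, 1 ≤ j → j ≤ k → ∫ t in (0 : ℝ)..1, ‖D m j t‖ ^ 2 ≤ K := fun m j h1 h2 =>
    (Finset.single_le_sum (fun j _ => integral_nonneg zero_le_one fun t _ => sq_nonneg _)
      (Finset.mem_Icc.2 ⟨h1, h2⟩)).trans (hK m)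
  have hD : ∀ m, ∀ i < k, ∀ t ∈ Icc (0 : ℝ) 1,
      HasDerivWithinAt (D m i) (D m (i + 1) t) (Icc 0 1) t := fun m i hi t ht =>
    (hx m).hasDerivWithinAt_iteratedDerivWithin (uniqueDiffOn_Icc one_pos)
      (by exact_mod_cast hi) ht
  have hDc : ∀ m, ∀ i ≤ k, ContinuousOn (D m i) (Icc 0 1) := fun m i hi =>
    (hx m).continuousOn_iteratedDerivWithin (by exact_mod_cast hi) (uniqueDiffOn_Icc one_pos)
  refine exists_strictMono_tendstoUniformlyOn_iteratedDerivWithin (g := D) (M := max R (1 + K))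
    zero_lt_one (fun r => (1 + K) / 2 * √r) (fun m i hi => hD m i (by omega))
    (fun m => hDc m _ (Nat.sub_le k 1)) (fun m i hi t ht => ?_) ?_ (fun m i hi s hs t ht => ?_)
  · rcases i with _ | i
    · simpa [D] using (hR m t ht).trans (le_max_left _ _)
    · refine (norm_le_of_hasDerivWithinAt_Icc_zero_one (hD m (i + 1) (by omega))
        (hDc m (i + 2) (by omega)) (hL2 m (i + 1) (by omega) (by omega))
        (hL2 m (i + 2) (by omega) (by omega)) ht).trans ?_
      linarith [le_max_right R (1 + K)]
  · simpa using (Real.continuous_sqrt.tendsto 0).const_mul ((1 + K) / 2)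
  · rw [dist_eq_norm, Real.dist_eq]
    exact norm_sub_le_mul_sqrt_of_hasDerivWithinAt (hD m i (by omega))
      (hDc m (i + 1) (by omega)) (hL2 m (i + 1) (by omega) (by omega)) ht hs
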